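/- Let G be a countable left-orderable group with only finitely many left orders. Then the rational series of G is unique: if G = G₀ ⊳ G₁ ⊳ ⋯ ⊳ G_{n+1} = {e} and G = H₀ ⊳ H₁ ⊳ ⋯ ⊳ H_{m+1} = {e} are both rational series of G, then n = m and G_i = H_i for all i. Consequently each G_i is invariant under every automorphism of G. -/

import Mathlib

/-!
If `G` carries a left order `ω` and two homomorphisms `f, g : G → ℚ` with `f ≠ 0` and
`ker f ⊄ ker g`, then ordering `G` lexicographically, first by `g - t f` and then by `ω`,
gives pairwise distinct left orders for a suitable infinite sequence of slopes `t`. Hence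
the kernel `G₁` of `G → G₀/G₁ ↪ ℚ` is the same for every rational series of a group with
finitely many left orders. Lexicographic extension across `G → G/G₁` embeds `LO(G₁)` into
`LO(G)`, so `G₁` again has finitely many left orders, and induction on the length gives
uniqueness. An automorphism maps a rational series to a rational series, which therefore
coincides with the original one.
-/

/-- A left-invariant strict total order on a group `G`. -/
structure LeftOrder (G : Type*) [Group G] where
  lt : G → G → Prop
  irrefl : ∀ g, ¬ lt g g
  trans : ∀ f g h, lt f g → lt g h → lt f h
  total : ∀ f g, f ≠ g → lt f g ∨ lt g f
  mul_left : ∀ f g h, lt f g → lt (h * f) (h * g)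

/-- A rational group: an (automatically abelian) group embeddable into `(ℚ, +)`. -/
def IsRationalGroup (H : Type*) [Group H] : Prop :=
  ∃ f : H → ℚ, (∀ a b : H, f (a * b) = f a + f b) ∧ Function.Injective f

/-- A group is bi-orderable if it admits a strict total order invariant under both
left and right multiplication. -/
def IsBiorderable (H : Type*) [Group H] : Prop :=
  ∃ r : H → H → Prop, (∀ a, ¬ r a a) ∧ (∀ a b c, r a b → r b c → r a c) ∧
    (∀ a b, a ≠ b → r a b ∨ r b a) ∧
    (∀ a b c, r a b → r (c * a) (c * b)) ∧ (∀ a b c, r a b → r (a * c) (b * c))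

/-- A rational series `G = G₀ ⊳ G₁ ⊳ ⋯ ⊳ G_{n+1} = {e}`: each `G_{i+1}` is a normal
subgroup of `G_i` and each quotient `G_i/G_{i+1}` is a nontrivial rational group. -/
def IsRationalSeries {G : Type*} [Group G] (n : ℕ) (Gs : ℕ → Subgroup G) : Prop :=
  Gs 0 = ⊤ ∧ Gs (n + 1) = ⊥ ∧
  ∀ i ≤ n, Gs (i + 1) ≤ Gs i ∧
    ∃ _ : ((Gs (i + 1)).subgroupOf (Gs i)).Normal,
      IsRationalGroup (↥(Gs i) ⧸ (Gs (i + 1)).subgroupOf (Gs i)) ∧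
      Nontrivial (↥(Gs i) ⧸ (Gs (i + 1)).subgroupOf (Gs i))

/-- The Tararin condition: for `0 ≤ i ≤ n − 1`, the subgroup `G_{i+2}` is normal in `G_i`
and the quotient `G_i/G_{i+2}` is not bi-orderable. -/
def TararinCondition {G : Type*} [Group G] (n : ℕ) (Gs : ℕ → Subgroup G) : Prop :=
  ∀ i, i + 2 ≤ n + 1 →
    ∃ _ : ((Gs (i + 2)).subgroupOf (Gs i)).Normal,
      ¬ IsBiorderable (↥(Gs i) ⧸ (Gs (i + 2)).subgroupOf (Gs i))

open Function Multiplicative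

namespace LeftOrder

variable {G : Type*} [Group G]

theorem ext {α β : LeftOrder G} (h : ∀ a b, α.lt a b ↔ β.lt a b) : α = β := by
  cases α; cases β; congr; funext a b; exact propext (h a b)

theorem lt_iff_one_lt_inv_mul (ω : LeftOrder G) {a b : G} :
    ω.lt a b ↔ ω.lt 1 (a⁻¹ * b) := by
  constructor
  · intro h; simpa using ω.mul_left _ _ a⁻¹ h
  · intro h; simpa using ω.mul_left _ _ a h

theorem one_lt_mul (ω : LeftOrder G) {a b : G} (ha : ω.lt 1 a) (hb : ω.lt 1 b) :
    ω.lt 1 (a * b) :=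
  ω.trans _ _ _ ha (by simpa using ω.mul_left _ _ a hb)

theorem one_lt_or_one_lt_inv (ω : LeftOrder G) {a : G} (ha : a ≠ 1) :
    ω.lt 1 a ∨ ω.lt 1 a⁻¹ :=
  (ω.total 1 a ha.symm).imp_right fun h => by simpa using ω.mul_left _ _ a⁻¹ h

def ofPositiveCone (P : G → Prop) (not_one : ¬ P 1) (mul : ∀ a b, P a → P b → P (a * b))
    (or_inv : ∀ a, a ≠ 1 → P a ∨ P a⁻¹) : LeftOrder G where
  lt x y := P (x⁻¹ * y)
  irrefl x := by simpa using not_one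
  trans x y z hxy hyz := by simpa [mul_assoc] using mul _ _ hxy hyz
  total x y hxy := by simpa using or_inv (x⁻¹ * y) (by simpa [inv_mul_eq_one] using hxy)
  mul_left x y z h := by simpa [mul_assoc] using h

def restrict (ω : LeftOrder G) (K : Subgroup G) : LeftOrder K where
  lt a b := ω.lt a b
  irrefl a := ω.irrefl a
  trans a b c := ω.trans a b c
  total a b hab := ω.total a b (Subtype.coe_injective.ne hab)
  mul_left a b c := ω.mul_left a b c

variable {A : Type*} [CommGroup A] [LinearOrder A] [IsOrderedMonoid A]

def lex (f : G →* A) (α : LeftOrder f.ker) : LeftOrder G :=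
  ofPositiveCone (fun x => 1 < f x ∨ ∃ h : x ∈ f.ker, α.lt 1 ⟨x, h⟩)
    (by
      rintro (h | ⟨_, h⟩)
      · simp at h
      · exact α.irrefl _ h)
    (by
      rintro a b (ha | ⟨ha, ha'⟩) (hb | ⟨hb, hb'⟩)
      · exact Or.inl (by simpa using one_lt_mul' ha hb)
      · exact Or.inl (by simpa [f.mem_ker.1 hb] using ha)
      · exact Or.inl (by simpa [f.mem_ker.1 ha] using hb)
      · exact Or.inr ⟨f.ker.mul_mem ha hb, α.one_lt_mul ha' hb'⟩)
    (by
      intro a ha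
      by_cases hfa : f a = 1
      · have hne : (⟨a, hfa⟩ : f.ker) ≠ 1 := fun h => ha (congrArg Subtype.val h)
        exact (α.one_lt_or_one_lt_inv hne).imp (fun h => Or.inr ⟨hfa, h⟩)
          (fun h => Or.inr ⟨f.ker.inv_mem hfa, h⟩)
      · exact (lt_or_gt_of_ne hfa).symm.imp Or.inl fun h => Or.inl (by simpa using h))

theorem lex_one_lt_iff {f : G →* A} (α : LeftOrder f.ker) {x : G} (hx : f x ≠ 1) :
    (lex f α).lt 1 x ↔ 1 < f x := by
  simp [lex, ofPositiveCone, hx]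

theorem restrict_lex (f : G →* A) (α : LeftOrder f.ker) : (lex f α).restrict f.ker = α := by
  refine ext fun a b => ?_
  change (1 < f (a⁻¹ * b : f.ker) ∨ ∃ h, α.lt 1 ⟨_, h⟩) ↔ α.lt a b
  rw [f.mem_ker.1 (a⁻¹ * b).2, α.lt_iff_one_lt_inv_mul]
  exact (or_iff_right (lt_irrefl (1 : A))).trans ⟨fun ⟨_, h⟩ => h, fun h => ⟨(a⁻¹ * b).2, h⟩⟩

theorem lex_injective (f : G →* A) : Injective (lex f) := fun α β h => by
  rw [← restrict_lex f α, h, restrict_lex]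

theorem finite_ker [Finite (LeftOrder G)] (f : G →* A) : Finite (LeftOrder f.ker) :=
  Finite.of_injective _ (lex_injective f)

end LeftOrder

theorem isRationalGroup_iff {Q : Type*} [Group Q] :
    IsRationalGroup Q ↔ ∃ ι : Q →* Multiplicative ℚ, Injective ι := by
  constructor
  · rintro ⟨f, hf, hinj⟩
    exact ⟨MonoidHom.mk' (fun q => ofAdd (f q)) (by simp [hf]), ofAdd.injective.comp hinj⟩
  · rintro ⟨ι, hι⟩
    exact ⟨fun q => toAdd (ι q), by simp, toAdd.injective.comp hι⟩

section RationalStep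

variable {G : Type*} [Group G]

def IsRationalStep (H K : Subgroup G) : Prop :=
  K ≤ H ∧ ∃ _ : (K.subgroupOf H).Normal,
    IsRationalGroup (H ⧸ K.subgroupOf H) ∧ Nontrivial (H ⧸ K.subgroupOf H)

theorem isRationalStep_iff_exists_hom {H K : Subgroup G} :
    IsRationalStep H K ↔
      K ≤ H ∧ ∃ p : H →* Multiplicative ℚ, p.ker = K.subgroupOf H ∧ p ≠ 1 := by
  refine and_congr_right fun _ => ⟨?_, ?_⟩
  · rintro ⟨_, hrat, hnt⟩
    obtain ⟨ι, hι⟩ := isRationalGroup_iff.1 hrat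
    refine ⟨ι.comp (QuotientGroup.mk' _), by rw [MonoidHom.ker_comp_of_injective _ _ hι,
      QuotientGroup.ker_mk'], fun hp => ?_⟩
    obtain ⟨q, hq⟩ := exists_ne (1 : H ⧸ K.subgroupOf H)
    obtain ⟨x, rfl⟩ := QuotientGroup.mk'_surjective _ q
    exact hq (hι (by simpa using DFunLike.congr_fun hp x))
  · rintro ⟨p, hp, hp1⟩
    rw [← hp]
    obtain ⟨x, hx⟩ : ∃ x, p x ≠ 1 := by simpa [DFunLike.ext_iff] using hp1
    refine ⟨inferInstance, isRationalGroup_iff.2 ⟨_, QuotientGroup.kerLift_injective p⟩,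
      nontrivial_of_ne (x : H ⧸ p.ker) 1 fun h => hx ?_⟩
    simpa using congrArg (QuotientGroup.kerLift p) h

theorem IsRationalStep.ne_bot {H K : Subgroup G} (h : IsRationalStep H K) : H ≠ ⊥ := by
  rintro rfl
  obtain ⟨-, p, -, hp⟩ := isRationalStep_iff_exists_hom.1 h
  exact hp (Subsingleton.elim _ _)

theorem IsRationalStep.comap {L : Type*} [Group L] {φ : L →* G} {H K : Subgroup G}
    (hH : H ≤ φ.range) (h : IsRationalStep H K) :
    IsRationalStep (H.comap φ) (K.comap φ) := by
  obtain ⟨hKH, p, hp, hp1⟩ := isRationalStep_iff_exists_hom.1 h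
  have hsurj : Surjective (φ.subgroupComap H) := fun y => by
    obtain ⟨x, hx⟩ := hH y.2
    exact ⟨⟨x, by simp [hx]⟩, Subtype.ext hx⟩
  refine isRationalStep_iff_exists_hom.2
    ⟨Subgroup.comap_mono hKH, p.comp (φ.subgroupComap H), ?_, ?_⟩
  · ext x
    rw [MonoidHom.mem_ker, MonoidHom.comp_apply, ← MonoidHom.mem_ker, hp]
    rfl
  · rw [ne_eq, ← MonoidHom.one_comp (φ.subgroupComap H), MonoidHom.cancel_right hsurj]
    exact hp1

end RationalStep

section TwoHoms

variable {G : Type*} [Group G]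

def subSMulHom (g : G →* Multiplicative ℚ) (t : ℚ) (f : G →* Multiplicative ℚ) :
    G →* Multiplicative ℚ :=
  MonoidHom.mk' (fun x => ofAdd (toAdd (g x) - t * toAdd (f x))) fun x y => by
    simp only [map_mul, toAdd_mul, ← ofAdd_add]
    ring_nf

@[simp]
theorem toAdd_subSMulHom (g : G →* Multiplicative ℚ) (t : ℚ) (f : G →* Multiplicative ℚ) (x : G) :
    toAdd (subSMulHom g t f x) = toAdd (g x) - t * toAdd (f x) :=
  rfl

theorem MonoidHom.ker_le_ker_of_finite_leftOrder [Nonempty (LeftOrder G)]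
    [Finite (LeftOrder G)] {f g : G →* Multiplicative ℚ} (hf : f ≠ 1) : f.ker ≤ g.ker := by
  obtain ⟨ω⟩ := ‹Nonempty (LeftOrder G)›
  intro x₀ hx₀
  by_contra hgx₀
  obtain ⟨x₁, hx₁⟩ : ∃ x₁, f x₁ ≠ 1 := by simpa [DFunLike.ext_iff] using hf
  set a := toAdd (f x₁)
  set c := toAdd (g x₀)
  set d := toAdd (g x₁)
  have ha : a ≠ 0 := toAdd_eq_zero.not.2 hx₁
  have hc : c ≠ 0 := toAdd_eq_zero.not.2 hgx₀
  -- The slope is chosen so that `v n` vanishes on `x₀ ^ (2 * n) * x₁`; then `v n` and `v n'`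
  -- (`n < n'`) take values of opposite signs on `x₀ ^ (2 * n + 1) * x₁`.
  let v : ℕ → G →* Multiplicative ℚ := fun n => subSMulHom g ((d + 2 * n * c) / a) f
  have hv : ∀ (n : ℕ) (k : ℤ), toAdd (v n (x₀ ^ k * x₁)) = (k - 2 * n) * c := by
    intro n k
    simp only [v, toAdd_subSMulHom, map_mul, map_zpow, f.mem_ker.1 hx₀, toAdd_mul, toAdd_zpow,
      toAdd_one, zsmul_eq_mul]
    field_simp
    ring
  let O : ℕ → LeftOrder G := fun n => LeftOrder.lex (v n) (ω.restrict _)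
  have hO : ∀ n n' : ℕ,
      (O n').lt 1 (x₀ ^ (2 * n + 1 : ℤ) * x₁) ↔ 0 < (2 * n + 1 - 2 * n' : ℚ) * c := by
    intro n n'
    have hodd : (2 * n + 1 - 2 * n' : ℚ) ≠ 0 := sub_ne_zero.2 (by exact_mod_cast (by omega))
    rw [LeftOrder.lex_one_lt_iff, ← toAdd_lt, toAdd_one, hv]
    · push_cast; rfl
    · rw [ne_eq, ← toAdd_eq_zero, hv]
      push_cast
      exact mul_ne_zero hodd hc
  have hinj : Injective O := Injective.of_lt_imp_ne fun n n' hlt heq => by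
    have hneg : (2 * n + 1 - 2 * n' : ℚ) < 0 := by
      rw [sub_neg]; exact_mod_cast (by omega)
    have h := hO n n
    rw [heq, hO n n', show (2 * n + 1 - 2 * n : ℚ) * c = c by ring] at h
    rcases hc.lt_or_gt with hc | hc
    · exact hc.not_gt (h.1 (mul_pos_of_neg_of_neg hneg hc))
    · exact (mul_neg_of_neg_of_pos hneg hc).not_gt (h.2 hc)
  have := Infinite.of_injective O hinj
  exact not_finite (LeftOrder G)

end TwoHoms

namespace IsRationalSeries

variable {G : Type*} [Group G] {n : ℕ} {Gs : ℕ → Subgroup G}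

theorem step (hG : IsRationalSeries n Gs) {i : ℕ} (hi : i ≤ n) :
    IsRationalStep (Gs i) (Gs (i + 1)) :=
  hG.2.2 i hi

theorem apply_le_apply_of_le (hG : IsRationalSeries n Gs) {i j : ℕ} (hij : i ≤ j) (hj : j ≤ n + 1) :
    Gs j ≤ Gs i := by
  induction j, hij using Nat.le_induction with
  | base => exact le_rfl
  | succ j hij ih => exact (hG.step (by omega)).1.trans (ih (by omega))

theorem apply_one_eq_bot_iff (hG : IsRationalSeries n Gs) : Gs 1 = ⊥ ↔ n = 0 := by
  refine ⟨fun h => by_contra fun hn => (hG.step (Nat.one_le_iff_ne_zero.2 hn)).ne_bot h, ?_⟩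
  rintro rfl
  exact hG.2.1

theorem exists_hom_ker_eq (hG : IsRationalSeries n Gs) :
    ∃ p : G →* Multiplicative ℚ, p.ker = Gs 1 ∧ p ≠ 1 := by
  have h0 := hG.step (Nat.zero_le n)
  rw [hG.1] at h0
  obtain ⟨-, p, hp, hp1⟩ := isRationalStep_iff_exists_hom.1 h0
  refine ⟨p.comp Subgroup.topEquiv.symm.toMonoidHom, ?_, fun h => hp1 ?_⟩
  · ext x
    rw [MonoidHom.mem_ker, MonoidHom.comp_apply, ← MonoidHom.mem_ker, hp]
    rfl
  · exact MonoidHom.ext fun x => DFunLike.congr_fun h (x : G)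

theorem comap {L : Type*} [Group L] (hG : IsRationalSeries n Gs) {φ : L →* G}
    (hφ : Bijective φ) : IsRationalSeries n fun i => (Gs i).comap φ := by
  refine ⟨by simp only [hG.1, Subgroup.comap_top], ?_, fun i hi => (hG.step hi).comap ?_⟩
  · simp only [hG.2.1, MonoidHom.comap_bot, MonoidHom.ker_eq_bot_iff]
    exact hφ.1
  · rw [MonoidHom.range_eq_top.2 hφ.2]
    exact le_top

theorem tail (hG : IsRationalSeries (n + 1) Gs) :
    IsRationalSeries n fun i => (Gs (i + 1)).subgroupOf (Gs 1) := by
  refine ⟨Subgroup.subgroupOf_self _, ?_, fun i hi => (hG.step (by omega)).comap ?_⟩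
  · simp only [hG.2.1, Subgroup.bot_subgroupOf]
  · rw [Subgroup.range_subtype]
    exact hG.apply_le_apply_of_le (by omega) (by omega)

theorem finite_leftOrder_apply_one [Finite (LeftOrder G)] (hG : IsRationalSeries n Gs) :
    Finite (LeftOrder (Gs 1)) := by
  obtain ⟨p, hp, -⟩ := hG.exists_hom_ker_eq
  rw [← hp]
  exact LeftOrder.finite_ker p

theorem apply_one_eq [Nonempty (LeftOrder G)] [Finite (LeftOrder G)] {m : ℕ}
    {Hs : ℕ → Subgroup G} (hG : IsRationalSeries n Gs) (hH : IsRationalSeries m Hs) :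
    Gs 1 = Hs 1 := by
  obtain ⟨p, hpG, hp⟩ := hG.exists_hom_ker_eq
  obtain ⟨q, hqH, hq⟩ := hH.exists_hom_ker_eq
  rw [← hpG, ← hqH]
  exact le_antisymm (p.ker_le_ker_of_finite_leftOrder hp) (q.ker_le_ker_of_finite_leftOrder hq)

theorem unique [Nonempty (LeftOrder G)] [Finite (LeftOrder G)] {m : ℕ} {Hs : ℕ → Subgroup G}
    (hG : IsRationalSeries n Gs) (hH : IsRationalSeries m Hs) :
    n = m ∧ ∀ i ≤ n + 1, Gs i = Hs i := by
  induction n generalizing G m with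
  | zero =>
    have h1 := hG.apply_one_eq hH
    obtain rfl : m = 0 := hH.apply_one_eq_bot_iff.1 (h1 ▸ hG.apply_one_eq_bot_iff.2 rfl)
    refine ⟨rfl, fun i hi => ?_⟩
    interval_cases i
    exacts [hG.1.trans hH.1.symm, h1]
  | succ k ih =>
    have h1 := hG.apply_one_eq hH
    obtain ⟨m, rfl⟩ := Nat.exists_eq_succ_of_ne_zero fun hm =>
      k.succ_ne_zero (hG.apply_one_eq_bot_iff.1 (h1 ▸ hH.apply_one_eq_bot_iff.2 hm))
    have := hG.finite_leftOrder_apply_one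
    have : Nonempty (LeftOrder (Gs 1)) := ‹Nonempty (LeftOrder G)›.map (·.restrict _)
    have hH' := hH.tail
    rw [← h1] at hH'
    obtain ⟨rfl, htail⟩ := ih hG.tail hH'
    refine ⟨rfl, fun i hi => ?_⟩
    cases i with
    | zero => exact hG.1.trans hH.1.symm
    | succ j =>
      have h := Subgroup.subgroupOf_inj.1 (htail j (by omega))
      rwa [inf_eq_left.2 (hG.apply_le_apply_of_le (by omega) hi),
        inf_eq_left.2 (h1 ▸ hH.apply_le_apply_of_le (by omega) (by omega))] at h

end IsRationalSeries

theorem tararin_rational_series_unique_general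
    {G : Type*} [Group G]
    (horder : Nonempty (LeftOrder G)) (hfin : Finite (LeftOrder G))
    (n m : ℕ) (Gs Hs : ℕ → Subgroup G)
    (hG : IsRationalSeries n Gs) (hH : IsRationalSeries m Hs) :
    n = m ∧ (∀ i ≤ n + 1, Gs i = Hs i) ∧
      ∀ (φ : G ≃* G) (i : ℕ), i ≤ n + 1 →
        Subgroup.map φ.toMonoidHom (Gs i) = Gs i := by
  obtain ⟨hnm, hGH⟩ := hG.unique hH
  refine ⟨hnm, hGH, fun φ i hi => ?_⟩
  rw [Subgroup.map_equiv_eq_comap_symm']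
  exact ((hG.comap φ.symm.bijective).unique hG).2 i hi

/-- For a countable left-orderable group with only finitely many left
orders, the rational series is unique, and consequently each of its terms is invariant
under every automorphism of `G`. -/
theorem tararin_rational_series_unique
    {G : Type*} [Group G] [Countable G]
    (horder : Nonempty (LeftOrder G)) (hfin : Finite (LeftOrder G))
    (n m : ℕ) (Gs Hs : ℕ → Subgroup G)
    (hG : IsRationalSeries n Gs) (hH : IsRationalSeries m Hs) :
    n = m ∧ (∀ i ≤ n + 1, Gs i = Hs i) ∧
      ∀ (φ : G ≃* G) (i : ℕ), i ≤ n + 1 →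
        Subgroup.map φ.toMonoidHom (Gs i) = Gs i :=
  tararin_rational_series_unique_general horder hfin n m Gs Hs hG hH
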